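/- Small approximation errors can derail greedy selection: in the MDP of Figure 3a, for any ε ∈ (0, 1/2) and horizon H ≥ 4, there exist approximate value functions V̂^k with state-wise error |V̂_h^k(s) − V_h^k(s)| ≤ ε for all s, h, k such that the greedy policy π̂ following argmax_k V̂_h^k at every state obtains cumulative reward 0 from s₀, while the true max-following policy obtains H − 2 + 2ε. -/
import Mathlib


/-- Value function of a policy in a deterministic finite-horizon MDP with transition
function `next` and reward `R`. -/
def dval {S A : Type} (next : S → A → S) (R : S → A → ℝ)
    (H : ℕ) (π : ℕ → S → A) : ℕ → S → ℝ
  | h, s =>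
    if h < H then R s (π h s) + dval next R H π (h + 1) (next s (π h s))
    else 0
termination_by h _ => H - h
decreasing_by omega

/-- The six-state MDP of Figure 3a. Action `true` = right, `false` = left. -/
def fNext : Fin 6 → Bool → Fin 6
  | 0, true => 1
  | 0, false => 2
  | 1, _ => 1
  | 2, true => 3
  | 2, false => 5
  | 3, true => 4
  | 3, false => 3
  | 4, _ => 4
  | 5, _ => 5

/-- Rewards: `ε` on `s₀ →(left) s₂` and on `s₂ →(right) s₃`, reward `1` on the
self-loop `s₃ →(left) s₃`, and `0` elsewhere. -/
noncomputable def fR (ε : ℝ) : Fin 6 → Bool → ℝ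
  | 0, false => ε
  | 2, true => ε
  | 3, false => 1
  | _, _ => 0

/-- The constituent policies: `π⁰ ≡ right`, `π¹ ≡ left`. -/
def fC : Fin 2 → ℕ → Fin 6 → Bool := fun k _ _ => k = 0
section Aux
variable (ε : ℝ) (H : ℕ)

lemma dval_eq (next : Fin 6 → Bool → Fin 6) (R : Fin 6 → Bool → ℝ) (π : ℕ → Fin 6 → Bool)
    (h : ℕ) (s : Fin 6) :
    dval next R H π h s =
      if h < H then R s (π h s) + dval next R H π (h + 1) (next s (π h s)) else 0 := by
  rw [dval]

lemma absorb (π : ℕ → Fin 6 → Bool) (s : Fin 6)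
    (h1 : ∀ a, fNext s a = s) (h2 : ∀ a, fR ε s a = 0) :
    ∀ n h, H - h ≤ n → dval fNext (fR ε) H π h s = 0 := by
  intro n
  induction n with
  | zero => intro h hn; rw [dval_eq, if_neg (by omega)]
  | succ n ih =>
    intro h hn
    rw [dval_eq]
    split
    · rw [h1, h2, ih (h + 1) (by omega)]; ring
    · rfl

lemma absorb1 (π : ℕ → Fin 6 → Bool) (h : ℕ) : dval fNext (fR ε) H π h 1 = 0 :=
  absorb ε H π 1 (by intro a; cases a <;> rfl) (by intro a; cases a <;> rfl) (H - h) h le_rfl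

lemma absorb4 (π : ℕ → Fin 6 → Bool) (h : ℕ) : dval fNext (fR ε) H π h 4 = 0 :=
  absorb ε H π 4 (by intro a; cases a <;> rfl) (by intro a; cases a <;> rfl) (H - h) h le_rfl

lemma absorb5 (π : ℕ → Fin 6 → Bool) (h : ℕ) : dval fNext (fR ε) H π h 5 = 0 :=
  absorb ε H π 5 (by intro a; cases a <;> rfl) (by intro a; cases a <;> rfl) (H - h) h le_rfl

-- loop value at s₃ for a policy going left there
lemma loopval (π : ℕ → Fin 6 → Bool)
    (hp : ∀ h', h' < H → π h' 3 = false) :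
    ∀ n h, H - h ≤ n → dval fNext (fR ε) H π h 3 = ((H - h : ℕ) : ℝ) := by
  intro n
  induction n with
  | zero =>
    intro h hn
    rw [dval_eq, if_neg (by omega)]
    have : H - h = 0 := by omega
    rw [this]; norm_num
  | succ n ih =>
    intro h hn
    rw [dval_eq]
    split
    · rename_i hlt
      rw [hp h hlt]
      have : fNext 3 false = 3 := rfl
      rw [this, ih (h + 1) (by omega)]
      have : fR ε 3 false = 1 := rfl
      rw [this]
      have h1 : h + 1 ≤ H := hlt
      have : (H - h : ℕ) = (H - (h + 1) : ℕ) + 1 := by omega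
      rw [this]; push_cast; ring
    · rename_i hlt
      have : H - h = 0 := by omega
      rw [this]; norm_num

-- constituent values
lemma v0_3 (h : ℕ) : dval fNext (fR ε) H (fC 0) h 3 = 0 := by
  rw [dval_eq]
  split
  · show fR ε 3 (fC 0 h 3) + dval fNext (fR ε) H (fC 0) (h+1) (fNext 3 (fC 0 h 3)) = 0
    have h1 : fC 0 h 3 = true := rfl
    rw [h1]
    show (0 : ℝ) + dval fNext (fR ε) H (fC 0) (h+1) 4 = 0
    rw [absorb4]; ring
  · rfl

lemma v1_2 (h : ℕ) : dval fNext (fR ε) H (fC 1) h 2 = 0 := by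
  rw [dval_eq]
  split
  · have h1 : fC 1 h 2 = false := rfl
    rw [h1]
    show (0 : ℝ) + dval fNext (fR ε) H (fC 1) (h+1) 5 = 0
    rw [absorb5]; ring
  · rfl

lemma v0_2 (h : ℕ) (hh : h < H) : dval fNext (fR ε) H (fC 0) h 2 = ε := by
  rw [dval_eq, if_pos hh]
  have h1 : fC 0 h 2 = true := rfl
  rw [h1]
  show ε + dval fNext (fR ε) H (fC 0) (h+1) 3 = ε
  rw [v0_3]; ring

lemma v0_0 (h : ℕ) : dval fNext (fR ε) H (fC 0) h 0 = 0 := by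
  rw [dval_eq]
  split
  · have h1 : fC 0 h 0 = true := rfl
    rw [h1]
    show (0 : ℝ) + dval fNext (fR ε) H (fC 0) (h+1) 1 = 0
    rw [absorb1]; ring
  · rfl

lemma v1_0 (h : ℕ) (hh : h < H) : dval fNext (fR ε) H (fC 1) h 0 = ε := by
  rw [dval_eq, if_pos hh]
  have h1 : fC 1 h 0 = false := rfl
  rw [h1]
  show ε + dval fNext (fR ε) H (fC 1) (h+1) 2 = ε
  rw [v1_2]; ring

lemma v1_3 (h : ℕ) : dval fNext (fR ε) H (fC 1) h 3 = ((H - h : ℕ) : ℝ) :=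
  loopval ε H (fC 1) (fun _ _ => rfl) (H - h) h le_rfl

end Aux

/-- in the MDP of Figure 3a, for any `ε ∈ (0, 1/2)` and horizon `H ≥ 4`,
there are approximate value functions `V̂` with state-wise error at most `ε` such that
every policy that greedily follows `argmax_k V̂` obtains cumulative reward `0` from
`s₀`, whereas every true max-following policy obtains `H − 2 + 2ε`. -/
theorem approximation_errors_derail_greedy (ε : ℝ) (hε0 : 0 < ε) (hε1 : ε < 1 / 2)
    (H : ℕ) (hH : 4 ≤ H) :
    ∃ Vhat : Fin 2 → ℕ → Fin 6 → ℝ,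
      (∀ (k : Fin 2) (h : ℕ) (s : Fin 6),
        |Vhat k h s - dval fNext (fR ε) H (fC k) h s| ≤ ε) ∧
      (∀ πhat : ℕ → Fin 6 → Bool,
        (∀ h, h < H → ∀ s, ∃ k : Fin 2, πhat h s = fC k h s ∧
          ∀ k' : Fin 2, Vhat k' h s ≤ Vhat k h s) →
        dval fNext (fR ε) H πhat 0 0 = 0) ∧
      (∀ π : ℕ → Fin 6 → Bool,
        (∀ h, h < H → ∀ s, ∃ k : Fin 2, π h s = fC k h s ∧
          ∀ k' : Fin 2, dval fNext (fR ε) H (fC k') h s ≤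
            dval fNext (fR ε) H (fC k) h s) →
        dval fNext (fR ε) H π 0 0 = (H : ℝ) - 2 + 2 * ε) := by
  have h0H : 0 < H := by omega
  refine ⟨fun k h s => dval fNext (fR ε) H (fC k) h s +
    (if s = 0 then (if k = 0 then ε else -ε) else 0), ?_, ?_, ?_⟩
  · intro k h s
    simp only [add_sub_cancel_left]
    split
    · split
      · rw [abs_of_pos hε0]
      · rw [abs_neg, abs_of_pos hε0]
    · simpa using hε0.le
  · intro πhat hyp
    obtain ⟨k, hk, hmax⟩ := hyp 0 h0H 0
    have hV0 : dval fNext (fR ε) H (fC 0) 0 0 +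
        (if (0 : Fin 6) = 0 then (if (0 : Fin 2) = 0 then ε else -ε) else 0) = ε := by
      rw [v0_0]; simp
    have hV1 : dval fNext (fR ε) H (fC 1) 0 0 +
        (if (0 : Fin 6) = 0 then (if (1 : Fin 2) = 0 then ε else -ε) else 0) = 0 := by
      rw [v1_0 ε H 0 h0H]; simp
    have hk0 : k = 0 := by
      by_contra hne
      have hk1 : k = 1 := by omega
      have h2 := hmax 0
      rw [hk1] at h2
      simp only [v0_0, v1_0 ε H 0 h0H, if_pos rfl,
        if_neg (by decide : ¬ (1 : Fin 2) = 0)] at h2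
      norm_num at h2
      linarith
    rw [hk0] at hk
    have hP : πhat 0 0 = true := hk
    rw [dval_eq, if_pos h0H, hP]
    show fR ε 0 true + dval fNext (fR ε) H πhat 1 (fNext 0 true) = 0
    show (0 : ℝ) + dval fNext (fR ε) H πhat 1 1 = 0
    rw [absorb1]; ring
  · intro π hyp
    -- at s₀, step 0: must go left
    obtain ⟨k, hk, hmax⟩ := hyp 0 h0H 0
    have hk1 : k = 1 := by
      by_contra hne
      have hk0 : k = 0 := by omega
      have := hmax 1
      rw [hk0, v0_0, v1_0 ε H 0 h0H] at this
      linarith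
    rw [hk1] at hk
    have hP0 : π 0 0 = false := hk
    -- at s₂, step 1: must go right
    obtain ⟨k2, hk2, hmax2⟩ := hyp 1 (by omega) 2
    have hk20 : k2 = 0 := by
      by_contra hne
      have : k2 = 1 := by omega
      have h' := hmax2 0
      rw [this, v1_2, v0_2 ε H 1 (by omega)] at h'
      linarith
    rw [hk20] at hk2
    have hP2 : π 1 2 = true := hk2
    -- at s₃: must go left always (for h < H)
    have hP3 : ∀ h', h' < H → π h' 3 = false := by
      intro h' hh'
      obtain ⟨k3, hk3, hmax3⟩ := hyp h' hh' 3
      have hk31 : k3 = 1 := by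
        by_contra hne
        have : k3 = 0 := by omega
        have h'' := hmax3 1
        rw [this, v0_3, v1_3] at h''
        have : (0 : ℝ) < ((H - h' : ℕ) : ℝ) := by
          have : 0 < H - h' := by omega
          exact_mod_cast this
        linarith
      rw [hk31] at hk3
      exact hk3
    have hloop : dval fNext (fR ε) H π 2 3 = ((H - 2 : ℕ) : ℝ) :=
      loopval ε H π hP3 (H - 2) 2 le_rfl
    rw [dval_eq, if_pos h0H, hP0]
    show fR ε 0 false + dval fNext (fR ε) H π 1 (fNext 0 false) = _
    show ε + dval fNext (fR ε) H π 1 2 = _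
    rw [dval_eq, if_pos (show 1 < H by omega), hP2]
    show ε + (fR ε 2 true + dval fNext (fR ε) H π 2 (fNext 2 true)) = _
    show ε + (ε + dval fNext (fR ε) H π 2 3) = _
    rw [hloop]
    have : ((H - 2 : ℕ) : ℝ) = (H : ℝ) - 2 := by
      have : 2 ≤ H := by omega
      push_cast [Nat.cast_sub this]
      ring
    rw [this]; ring
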